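/- Let the time-delay switched linear system ẋ(t) = A⁰_{σ(t)} x(t) + ∫_{[−h,0]} d[ν_{σ(t)}(θ)] x(t+θ), σ ∈ Σ₊, be exponentially stable under arbitrary switching, and assume the set G = { ξ ∈ ℝⁿ : ξ ≫ 0 and (M(A⁰_k) + V(ν_k)) ξ ≪ 0 for all k = 1,…,N } is nonempty. Subject the data to structured affine perturbations A⁰_k → A⁰_k + D⁰_k Δ_k E⁰_k and ν_k → ν_k + D¹_k δ_k E¹_k. Then the structured stability radius satisfies the lower bound r_ℝ(A,Γ,D,E) ≥ (1/M₀) · sup_{ξ ∈ G} β(ξ)/‖ξ‖, where for ξ ∈ G, β(ξ) = min over k = 1,…,N and i = 1,…,n of the i-th component of −(M(A⁰_k) + V(ν_k)) ξ, and M₀ = max_{k} max{ ‖D⁰_k‖ ‖E⁰_k‖, ‖D¹_k‖ ‖E¹_k‖ }. Equivalently, for every perturbation with ‖Δ‖_max < (1/M₀) β(ξ)/‖ξ‖ for some ξ ∈ G, the perturbed switched system is exponentially stable under arbitrary switching. -/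

import Mathlib

open MeasureTheory Set Filter Matrix
open scoped ENNReal

noncomputable section

/-- Integral of a real function against a finite signed Borel measure. -/
def sint {α : Type*} [MeasurableSpace α] (s : MeasureTheory.SignedMeasure α) (f : α → ℝ) : ℝ :=
  (∫ a, f a ∂s.toJordanDecomposition.posPart) - ∫ a, f a ∂s.toJordanDecomposition.negPart

/-- Total variation of a finite signed measure, evaluated on the whole space. -/
def tvar {α : Type*} [MeasurableSpace α] (s : MeasureTheory.SignedMeasure α) : ℝ :=
  (s.totalVariation Set.univ).toReal

/-- Row-sum matrix norm (the operator norm induced by the `∞`-norm). -/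
def matNorm {p q : ℕ} (A : Matrix (Fin p) (Fin q) ℝ) : ℝ :=
  ⨆ i, ∑ j, |A i j|

/-- The Metzler matrix `M(A)` associated with `A`. -/
def metz {n : ℕ} (A : Matrix (Fin n) (Fin n) ℝ) : Matrix (Fin n) (Fin n) ℝ :=
  Matrix.of fun i j => if i = j then A i j else |A i j|

/-- The matrix `V(ν)` of total variations of a matrix of signed measures. -/
def Vmat {h : ℝ} {p q : ℕ}
    (ν : Fin p → Fin q → MeasureTheory.SignedMeasure (Set.Icc (-h) (0:ℝ))) :
    Matrix (Fin p) (Fin q) ℝ :=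
  Matrix.of fun i j => tvar (ν i j)

/-- The norm `‖ν‖ = max_i Σ_j |ν_{ij}|([-h,0])` of a matrix of signed measures. -/
def mnorm {h : ℝ} {p q : ℕ}
    (ν : Fin p → Fin q → MeasureTheory.SignedMeasure (Set.Icc (-h) (0:ℝ))) : ℝ :=
  ⨆ i, ∑ j, tvar (ν i j)

/-- A switching signal: piecewise constant, right continuous, with strictly
positive dwell time (and normalized to be constant on `(-∞, 0]`). -/
def IsSwitchingSignal {N : ℕ} (σ : ℝ → Fin N) : Prop :=
  (∀ t ≤ (0:ℝ), σ t = σ 0) ∧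
  ∃ d : ℝ, 0 < d ∧ ∃ τ : ℕ → ℝ, τ 0 = 0 ∧ (∀ k, τ k + d ≤ τ (k + 1)) ∧
    ∀ k : ℕ, ∀ t ∈ Set.Ico (τ k) (τ (k + 1)), σ t = σ (τ k)

/-- `x` is a solution of the switched delay system `ẋ(t) = A⁰_{σ(t)} x(t) +
∫_{[-h,0]} d[ν_{σ(t)}(θ)] x(t+θ)` with switching signal `σ` and initial function `φ`. -/
def IsSolution (h : ℝ) {N n : ℕ} (σ : ℝ → Fin N)
    (A : Fin N → Matrix (Fin n) (Fin n) ℝ)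
    (ν : Fin N → Fin n → Fin n → MeasureTheory.SignedMeasure (Set.Icc (-h) (0:ℝ)))
    (φ : C(Set.Icc (-h) (0:ℝ), Fin n → ℝ)) (x : ℝ → Fin n → ℝ) : Prop :=
  ContinuousOn x (Set.Ici (-h)) ∧
  (∀ θ : Set.Icc (-h) (0:ℝ), x (θ : ℝ) = φ θ) ∧
  ∀ t : ℝ, 0 ≤ t → (∀ᶠ s in nhds t, σ s = σ t) → ∀ i,
    HasDerivWithinAt (fun s => x s i)
      ((∑ j, A (σ t) i j * x t j) +
        ∑ j, sint (ν (σ t) i j) fun θ => x (t + (θ : ℝ)) j)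
      (Set.Ici t) t

/-- Exponential stability of the switched system under arbitrary switching. -/
def ExpStableSw (h : ℝ) {N n : ℕ}
    (A : Fin N → Matrix (Fin n) (Fin n) ℝ)
    (ν : Fin N → Fin n → Fin n → MeasureTheory.SignedMeasure (Set.Icc (-h) (0:ℝ))) : Prop :=
  ∃ M > (0:ℝ), ∃ α > (0:ℝ), ∀ σ : ℝ → Fin N, IsSwitchingSignal σ →
    ∀ φ x, IsSolution h σ A ν φ x →
      ∀ t ≥ (0:ℝ), ‖x t‖ ≤ M * Real.exp (-α * t) * ‖φ‖

/-- `x` is a solution of the (non-switched) delay system `(A, ν)` with initial function `φ`. -/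
def IsSolution1 (h : ℝ) {n : ℕ} (A : Matrix (Fin n) (Fin n) ℝ)
    (ν : Fin n → Fin n → MeasureTheory.SignedMeasure (Set.Icc (-h) (0:ℝ)))
    (φ : C(Set.Icc (-h) (0:ℝ), Fin n → ℝ)) (x : ℝ → Fin n → ℝ) : Prop :=
  ContinuousOn x (Set.Ici (-h)) ∧
  (∀ θ : Set.Icc (-h) (0:ℝ), x (θ : ℝ) = φ θ) ∧
  ∀ t : ℝ, 0 ≤ t → ∀ i,
    HasDerivWithinAt (fun s => x s i)
      ((∑ j, A i j * x t j) + ∑ j, sint (ν i j) fun θ => x (t + (θ : ℝ)) j)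
      (Set.Ici t) t

/-- Exponential stability of a single (non-switched) delay system. -/
def ExpStable1 (h : ℝ) {n : ℕ} (A : Matrix (Fin n) (Fin n) ℝ)
    (ν : Fin n → Fin n → MeasureTheory.SignedMeasure (Set.Icc (-h) (0:ℝ))) : Prop :=
  ∃ M > (0:ℝ), ∃ α > (0:ℝ), ∀ φ x, IsSolution1 h A ν φ x →
    ∀ t ≥ (0:ℝ), ‖x t‖ ≤ M * Real.exp (-α * t) * ‖φ‖

/-- The perturbed kernel `ν + D¹ δ E¹`, with entries
`Σ_a Σ_b (D¹)_{ia} δ_{ab} (E¹)_{bj}` added to `ν_{ij}`. -/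
def pertKernel {h : ℝ} {n s p : ℕ}
    (ν : Fin n → Fin n → MeasureTheory.SignedMeasure (Set.Icc (-h) (0:ℝ)))
    (D1 : Matrix (Fin n) (Fin s) ℝ)
    (δ : Fin s → Fin p → MeasureTheory.SignedMeasure (Set.Icc (-h) (0:ℝ)))
    (E1 : Matrix (Fin p) (Fin n) ℝ) :
    Fin n → Fin n → MeasureTheory.SignedMeasure (Set.Icc (-h) (0:ℝ)) :=
  fun i j => ν i j + ∑ a, ∑ b, (D1 i a * E1 b j) • δ a b

/-!
A vector `ξ ≫ 0` with `(M(B_k) + V(μ_k)) ξ ≪ 0` for every mode is a common certificate of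
stability: for a small decay rate `α > 0` still `M(B_k) ξ + e^{αh} V(μ_k) ξ + α ξ ≪ 0`, and a
first-touching argument shows `|x_j(t)| ≤ c ξ_j e^{-αt}` for every solution, one switching
interval at a time. At a first touching time the delayed terms are controlled by the bound on
the past, at the cost of the factor `e^{αh}`, and the diagonal term of `B_k` carries the sign
of `x_j`, which is why only the Metzler matrix `M(B_k)` enters.

A structured perturbation of size `R` moves `(M + V) ξ` by at most `M₀ R ‖ξ‖` in each
component. So if `M₀ R < β(ξ)/‖ξ‖` for some `ξ ∈ G`, the perturbed system keeps the
certificate `ξ` and remains exponentially stable.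
-/

open scoped Topology

section TotalVariation

variable {X : Type*} [MeasurableSpace X]

lemma tvar_eq_measureReal (s : SignedMeasure X) : tvar s = s.totalVariation.real univ := rfl

lemma tvar_nonneg (s : SignedMeasure X) : 0 ≤ tvar s := ENNReal.toReal_nonneg

lemma tvar_add_le (s t : SignedMeasure X) : tvar (s + t) ≤ tvar s + tvar t := by
  have h : (s + t).totalVariation ≤ s.totalVariation + t.totalVariation := by
    simpa only [SignedMeasure.totalVariation_eq_variation] using VectorMeasure.variation_add_le
  rw [tvar_eq_measureReal, tvar_eq_measureReal, tvar_eq_measureReal, ← measureReal_add_apply]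
  exact ENNReal.toReal_mono (measure_ne_top _ _) (h univ)

lemma tvar_sum_le {ι : Type*} (f : ι → SignedMeasure X) (I : Finset ι) :
    tvar (∑ i ∈ I, f i) ≤ ∑ i ∈ I, tvar (f i) := by
  have h : (∑ i ∈ I, f i).totalVariation ≤ ∑ i ∈ I, (f i).totalVariation := by
    simpa only [SignedMeasure.totalVariation_eq_variation] using
      VectorMeasure.variation_finsetSum_le I f
  simpa only [tvar_eq_measureReal, measureReal_def, Measure.coe_finsetSum, Finset.sum_apply,
    ENNReal.toReal_sum fun i _ => measure_ne_top (f i).totalVariation univ] using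
    ENNReal.toReal_mono (by simp [measure_ne_top]) (h univ)

lemma tvar_smul (c : ℝ) (s : SignedMeasure X) : tvar (c • s) = |c| * tvar s := by
  simp [tvar, SignedMeasure.totalVariation_eq_variation, VectorMeasure.variation_smul]

lemma abs_sint_le (s : SignedMeasure X) {f : X → ℝ} {C : ℝ} (hf : ∀ a, |f a| ≤ C) :
    |sint s f| ≤ C * tvar s := by
  have hint (μ : Measure X) [IsFiniteMeasure μ] : |∫ a, f a ∂μ| ≤ C * μ.real univ := by
    simpa only [Real.norm_eq_abs] using norm_integral_le_of_norm_le_const (μ := μ)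
      (.of_forall fun a => (Real.norm_eq_abs (f a)).trans_le (hf a))
  calc |sint s f| ≤ |∫ a, f a ∂s.toJordanDecomposition.posPart|
        + |∫ a, f a ∂s.toJordanDecomposition.negPart| := abs_sub _ _
    _ ≤ C * s.toJordanDecomposition.posPart.real univ
        + C * s.toJordanDecomposition.negPart.real univ := add_le_add (hint _) (hint _)
    _ = C * tvar s := by
      rw [tvar_eq_measureReal, SignedMeasure.totalVariation, measureReal_add_apply, mul_add]

end TotalVariation

section MatrixNorm

variable {p q r : ℕ}

lemma sum_abs_le_matNorm (A : Matrix (Fin p) (Fin q) ℝ) (i : Fin p) :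
    ∑ j, |A i j| ≤ matNorm A :=
  le_ciSup (f := fun i => ∑ j, |A i j|) (Finite.bddAbove_range _) i

lemma matNorm_nonneg (A : Matrix (Fin p) (Fin q) ℝ) : 0 ≤ matNorm A :=
  Real.iSup_nonneg fun _ => Finset.sum_nonneg fun _ _ => abs_nonneg _

lemma matNorm_le_of_forall_sum_abs_le {A : Matrix (Fin p) (Fin q) ℝ} {C : ℝ} (hC : 0 ≤ C)
    (h : ∀ i, ∑ j, |A i j| ≤ C) : matNorm A ≤ C :=
  Real.iSup_le h hC

lemma matNorm_mul_le (A : Matrix (Fin p) (Fin q) ℝ) (B : Matrix (Fin q) (Fin r) ℝ) :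
    matNorm (A * B) ≤ matNorm A * matNorm B := by
  refine matNorm_le_of_forall_sum_abs_le (mul_nonneg (matNorm_nonneg A) (matNorm_nonneg B))
    fun i => ?_
  calc ∑ j, |(A * B) i j| ≤ ∑ j, ∑ k, |A i k| * |B k j| := by
        gcongr with j
        simpa only [mul_apply, abs_mul] using
          Finset.abs_sum_le_sum_abs (fun k => A i k * B k j) Finset.univ
    _ = ∑ k, |A i k| * ∑ j, |B k j| := by
        rw [Finset.sum_comm]; simp only [Finset.mul_sum]
    _ ≤ ∑ k, |A i k| * matNorm B := by
        gcongr with k; exact sum_abs_le_matNorm B k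
    _ ≤ matNorm A * matNorm B := by
        rw [← Finset.sum_mul]
        exact mul_le_mul_of_nonneg_right (sum_abs_le_matNorm A i) (matNorm_nonneg B)

lemma matNorm_mul_mul_le {s : ℕ} (A : Matrix (Fin p) (Fin q) ℝ) (B : Matrix (Fin q) (Fin r) ℝ)
    (C : Matrix (Fin r) (Fin s) ℝ) : matNorm (A * B * C) ≤ matNorm A * matNorm B * matNorm C :=
  (matNorm_mul_le _ _).trans (mul_le_mul_of_nonneg_right (matNorm_mul_le _ _) (matNorm_nonneg _))

lemma matNorm_map_abs (A : Matrix (Fin p) (Fin q) ℝ) : matNorm (A.map abs) = matNorm A := by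
  simp [matNorm]

lemma matNorm_Vmat {h : ℝ} (δ : Fin p → Fin q → SignedMeasure (Icc (-h) (0:ℝ))) :
    matNorm (Vmat δ) = mnorm δ := by
  simp [matNorm, mnorm, Vmat, abs_of_nonneg (tvar_nonneg _)]

lemma mnorm_nonneg {h : ℝ} (δ : Fin p → Fin q → SignedMeasure (Icc (-h) (0:ℝ))) :
    0 ≤ mnorm δ :=
  matNorm_Vmat δ ▸ matNorm_nonneg _

lemma mulVec_apply_le_matNorm_mul_norm (A : Matrix (Fin p) (Fin q) ℝ) (v : Fin q → ℝ)
    (i : Fin p) : (A *ᵥ v) i ≤ matNorm A * ‖v‖ :=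
  calc (A *ᵥ v) i ≤ ∑ j, |A i j| * |v j| := by
        simpa only [mulVec, dotProduct, abs_mul] using (le_abs_self _).trans
          (Finset.abs_sum_le_sum_abs (fun j => A i j * v j) Finset.univ)
    _ ≤ ∑ j, |A i j| * ‖v‖ := by
        gcongr with j; exact norm_le_pi_norm v j
    _ ≤ matNorm A * ‖v‖ := by
        rw [← Finset.sum_mul]
        exact mul_le_mul_of_nonneg_right (sum_abs_le_matNorm A i) (norm_nonneg v)

lemma mulVec_apply_mono {A B : Matrix (Fin p) (Fin q) ℝ} {v : Fin q → ℝ} {i : Fin p}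
    (hAB : ∀ j, A i j ≤ B i j) (hv : ∀ j, 0 ≤ v j) : (A *ᵥ v) i ≤ (B *ᵥ v) i :=
  Finset.sum_le_sum (s := Finset.univ) fun j _ => mul_le_mul_of_nonneg_right (hAB j) (hv j)

end MatrixNorm

section Perturbation

variable {h : ℝ} {n s p : ℕ}

lemma metz_add_le (A P : Matrix (Fin n) (Fin n) ℝ) (i j : Fin n) :
    metz (A + P) i j ≤ (metz A + P.map abs) i j := by
  by_cases hij : i = j
  · simp [metz, hij, le_abs_self]
  · simpa [metz, hij] using abs_add_le (A i j) (P i j)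

lemma Vmat_pertKernel_le (ν : Fin n → Fin n → SignedMeasure (Icc (-h) (0:ℝ)))
    (D1 : Matrix (Fin n) (Fin s) ℝ) (δ : Fin s → Fin p → SignedMeasure (Icc (-h) (0:ℝ)))
    (E1 : Matrix (Fin p) (Fin n) ℝ) (i j : Fin n) :
    Vmat (pertKernel ν D1 δ E1) i j ≤ (Vmat ν + D1.map abs * Vmat δ * E1.map abs) i j := by
  have hpert : (D1.map abs * Vmat δ * E1.map abs) i j
      = ∑ a, ∑ b, |D1 i a * E1 b j| * tvar (δ a b) := by
    simp only [mul_apply, map_apply, Vmat, of_apply, Finset.sum_mul, abs_mul]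
    rw [Finset.sum_comm]
    exact Finset.sum_congr rfl fun a _ => Finset.sum_congr rfl fun b _ => by ring
  rw [Matrix.add_apply, hpert]
  refine (tvar_add_le _ _).trans (add_le_add le_rfl ?_)
  refine (tvar_sum_le _ _).trans (Finset.sum_le_sum fun a _ => ?_)
  refine (tvar_sum_le _ _).trans (Finset.sum_le_sum fun b _ => ?_)
  exact (tvar_smul _ _).le

lemma metz_add_Vmat_pert_mulVec_le {r q : ℕ} (A : Matrix (Fin n) (Fin n) ℝ)
    (ν : Fin n → Fin n → SignedMeasure (Icc (-h) (0:ℝ)))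
    (D0 : Matrix (Fin n) (Fin r) ℝ) (Δ : Matrix (Fin r) (Fin q) ℝ) (E0 : Matrix (Fin q) (Fin n) ℝ)
    (D1 : Matrix (Fin n) (Fin s) ℝ) (δ : Fin s → Fin p → SignedMeasure (Icc (-h) (0:ℝ)))
    (E1 : Matrix (Fin p) (Fin n) ℝ) {ξ : Fin n → ℝ} (hξ : ∀ j, 0 ≤ ξ j) (i : Fin n) :
    ((metz (A + D0 * Δ * E0) + Vmat (pertKernel ν D1 δ E1)) *ᵥ ξ) i ≤
      ((metz A + Vmat ν) *ᵥ ξ) i +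
        (matNorm D0 * matNorm E0 * matNorm Δ + matNorm D1 * matNorm E1 * mnorm δ) * ‖ξ‖ := by
  set P0 := (D0 * Δ * E0).map abs
  set P1 := D1.map abs * Vmat δ * E1.map abs
  have hP0 : matNorm P0 ≤ matNorm D0 * matNorm E0 * matNorm Δ :=
    calc matNorm P0 ≤ matNorm D0 * matNorm Δ * matNorm E0 :=
          (matNorm_map_abs _).trans_le (matNorm_mul_mul_le _ _ _)
      _ = _ := by ring
  have hP1 : matNorm P1 ≤ matNorm D1 * matNorm E1 * mnorm δ :=
    calc matNorm P1 ≤ matNorm D1 * mnorm δ * matNorm E1 := by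
          rw [← matNorm_map_abs D1, ← matNorm_map_abs E1, ← matNorm_Vmat]
          exact matNorm_mul_mul_le _ _ _
      _ = _ := by ring
  have hentry : ∀ j, (metz (A + D0 * Δ * E0) + Vmat (pertKernel ν D1 δ E1)) i j ≤
      (metz A + Vmat ν + P0 + P1) i j := fun j => by
    have := add_le_add (metz_add_le A (D0 * Δ * E0) i j) (Vmat_pertKernel_le ν D1 δ E1 i j)
    simp only [Matrix.add_apply] at this ⊢
    linarith
  calc _ ≤ ((metz A + Vmat ν + P0 + P1) *ᵥ ξ) i := mulVec_apply_mono hentry hξ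
    _ = ((metz A + Vmat ν) *ᵥ ξ) i + (P0 *ᵥ ξ) i + (P1 *ᵥ ξ) i := by
        simp only [add_mulVec, Pi.add_apply]
    _ ≤ ((metz A + Vmat ν) *ᵥ ξ) i + matNorm P0 * ‖ξ‖ + matNorm P1 * ‖ξ‖ := by
        gcongr <;> exact mulVec_apply_le_matNorm_mul_norm _ _ _
    _ ≤ _ := by nlinarith [norm_nonneg ξ]

end Perturbation

section Comparison

lemma exists_pos_forall_add_exp_mul_add_mul_lt {ι : Type*} [Finite ι] (h : ℝ) {a b c : ι → ℝ}
    (hab : ∀ i, a i + b i < 0) : ∃ α > 0, ∀ i, a i + Real.exp (α * h) * b i + α * c i < 0 := by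
  have hev : ∀ᶠ α in 𝓝[>] (0:ℝ), ∀ i, a i + Real.exp (α * h) * b i + α * c i < 0 :=
    eventually_all.2 fun i => by
      have hcont : Continuous fun α : ℝ => a i + Real.exp (α * h) * b i + α * c i := by fun_prop
      refine (hcont.tendsto 0).eventually_lt_const ?_ |>.filter_mono nhdsWithin_le_nhds
      simpa using hab i
  obtain ⟨α, hα, hpos⟩ := (hev.and self_mem_nhdsWithin).exists
  exact ⟨α, hpos, hα⟩

lemma le_mul_of_forall_gt_le_mul {y a K : ℝ} (hK : 0 < K) (h : ∀ c > a, y ≤ c * K) :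
    y ≤ a * K := by
  rw [← div_le_iff₀ hK]
  exact le_of_forall_gt_imp_ge_of_dense fun c hc => (div_le_iff₀ hK).2 (h c hc)

lemma HasDerivWithinAt.eventually_nhdsGT_lt {f : ℝ → ℝ} {f' x : ℝ}
    (hf : HasDerivWithinAt f f' (Ici x) x) (hf' : f' < 0) : ∀ᶠ z in 𝓝[>] x, f z < f x := by
  filter_upwards [hf.Ioi_of_Ici.limsup_slope_le' (lt_irrefl x) hf', self_mem_nhdsWithin]
    with z hslope hxz
  rw [slope_def_field, div_neg_iff] at hslope
  rcases hslope with ⟨-, hzx⟩ | ⟨hincr, -⟩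
  · linarith [mem_Ioi.1 hxz]
  · linarith

lemma IsSwitchingSignal.exists_switchingTimes {N : ℕ} {σ : ℝ → Fin N} (hσ : IsSwitchingSignal σ) :
    ∃ τ : ℕ → ℝ, τ 0 = 0 ∧ Monotone τ ∧ (∀ t, ∃ m, t ≤ τ m) ∧
      ∀ m, ∀ t ∈ Ioo (τ m) (τ (m + 1)), ∀ᶠ s in 𝓝 t, σ s = σ t := by
  obtain ⟨-, d, hd, τ, hτ0, hτd, hτσ⟩ := hσ
  have hτ_ge : ∀ m : ℕ, m * d ≤ τ m := by
    intro m
    induction m with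
    | zero => simp [hτ0]
    | succ m ih => push_cast; linarith [hτd m]
  refine ⟨τ, hτ0, monotone_nat_of_le_succ fun m => by linarith [hτd m], fun t => ?_,
    fun m t ht => ?_⟩
  · obtain ⟨m, hm⟩ := exists_nat_ge (t / d)
    exact ⟨m, ((div_le_iff₀ hd).1 hm).trans (hτ_ge m)⟩
  · filter_upwards [Ioo_mem_nhds ht.1 ht.2] with s hs
    rw [hτσ m s (Ioo_subset_Ico_self hs), hτσ m t (Ioo_subset_Ico_self ht)]

lemma mul_mulVec_apply_le_metz_mulVec {n : ℕ} (A : Matrix (Fin n) (Fin n) ℝ) {y v : Fin n → ℝ}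
    {s : ℝ} {i : Fin n} (hs : |s| ≤ 1) (hy : ∀ j, |y j| ≤ v j) (hsy : s * y i = v i) :
    s * (A *ᵥ y) i ≤ (metz A *ᵥ v) i := by
  simp only [mulVec, dotProduct, Finset.mul_sum]
  refine Finset.sum_le_sum fun j _ => ?_
  by_cases hij : i = j
  · subst hij
    simp only [metz, of_apply, if_true, ← hsy]
    exact (mul_left_comm _ _ _).le
  · simp only [metz, of_apply, hij, if_false]
    calc s * (A i j * y j) ≤ |s| * (|A i j| * |y j|) := by
          rw [← abs_mul, ← abs_mul]; exact le_abs_self _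
      _ ≤ 1 * (|A i j| * v j) := by gcongr; exact hy j
      _ = |A i j| * v j := one_mul _

lemma abs_sum_sint_le_Vmat_mulVec {h : ℝ} {p q : ℕ}
    (μ : Fin p → Fin q → SignedMeasure (Icc (-h) (0:ℝ))) (i : Fin p)
    {f : Fin q → Icc (-h) (0:ℝ) → ℝ} {v : Fin q → ℝ} (hf : ∀ j θ, |f j θ| ≤ v j) :
    |∑ j, sint (μ i j) (f j)| ≤ (Vmat μ *ᵥ v) i :=
  (Finset.abs_sum_le_sum_abs _ _).trans <| Finset.sum_le_sum fun j _ =>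
    (abs_sint_le _ (hf j)).trans_eq (mul_comm _ _)

end Comparison

section Solution

def delayRhs {h : ℝ} {n : ℕ} (B : Matrix (Fin n) (Fin n) ℝ)
    (μ : Fin n → Fin n → SignedMeasure (Icc (-h) (0:ℝ))) (x : ℝ → Fin n → ℝ) (t : ℝ)
    (i : Fin n) : ℝ :=
  (B *ᵥ x t) i + ∑ j, sint (μ i j) fun θ => x (t + θ) j

lemma sign_mul_delayRhs_lt {h α c t s : ℝ} {n : ℕ} {B : Matrix (Fin n) (Fin n) ℝ}
    {μ : Fin n → Fin n → SignedMeasure (Icc (-h) (0:ℝ))} {ξ x} {i : Fin n}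
    (hh : 0 ≤ h) (hα : 0 ≤ α) (hξ : ∀ j, 0 < ξ j) (hc : 0 < c)
    (hdecay : (metz B *ᵥ ξ) i + Real.exp (α * h) * (Vmat μ *ᵥ ξ) i + α * ξ i < 0)
    (hhist : ∀ u ∈ Icc (t - h) t, ∀ j, |x u j| ≤ c * ξ j * Real.exp (-α * u))
    (hs : |s| = 1) (hsx : s * x t i = c * ξ i * Real.exp (-α * t)) :
    s * delayRhs B μ x t i < -α * (c * ξ i * Real.exp (-α * t)) := by
  have hlin : s * (B *ᵥ x t) i ≤ c * Real.exp (-α * t) * (metz B *ᵥ ξ) i := by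
    have := mul_mulVec_apply_le_metz_mulVec B (v := (c * Real.exp (-α * t)) • ξ) hs.le
      (fun j => (hhist t ⟨by linarith, le_rfl⟩ j).trans_eq (mul_right_comm _ _ _))
      (hsx.trans (mul_right_comm _ _ _))
    rwa [mulVec_smul, Pi.smul_apply, smul_eq_mul] at this
  have hpast : ∀ j (θ : Icc (-h) (0:ℝ)),
      |x (t + θ) j| ≤ (c * Real.exp (-α * t) * Real.exp (α * h)) * ξ j := by
    rintro j ⟨θ, hθ₁, hθ₂⟩
    calc |x (t + θ) j| ≤ c * ξ j * Real.exp (-α * (t + θ)) :=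
          hhist _ ⟨by linarith, by linarith⟩ j
      _ ≤ c * ξ j * Real.exp (-α * t + α * h) := by
          have := hξ j
          gcongr
          nlinarith
      _ = _ := by rw [Real.exp_add]; ring
  have hdelay : s * ∑ j, sint (μ i j) (fun θ => x (t + θ) j) ≤
      c * Real.exp (-α * t) * (Real.exp (α * h) * (Vmat μ *ᵥ ξ) i) := by
    have := abs_sum_sint_le_Vmat_mulVec μ i
      (v := (c * Real.exp (-α * t) * Real.exp (α * h)) • ξ) hpast
    rw [mulVec_smul, Pi.smul_apply, smul_eq_mul] at this
    calc _ ≤ |s * ∑ j, sint (μ i j) (fun θ => x (t + θ) j)| := le_abs_self _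
      _ ≤ _ := by rw [abs_mul, hs, one_mul]; linarith
  have := mul_neg_of_pos_of_neg (mul_pos hc (Real.exp_pos (-α * t))) hdecay
  rw [delayRhs, mul_add]
  nlinarith

variable {h α : ℝ} {N n : ℕ} {B : Fin N → Matrix (Fin n) (Fin n) ℝ}
  {μ : Fin N → Fin n → Fin n → SignedMeasure (Icc (-h) (0:ℝ))} {ξ : Fin n → ℝ}
  {σ : ℝ → Fin N} {φ : C(Icc (-h) (0:ℝ), Fin n → ℝ)} {x : ℝ → Fin n → ℝ}

lemma IsSolution.continuousWithinAt_Ioi (hsol : IsSolution h σ B μ φ x) {t : ℝ} (ht : -h ≤ t)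
    (i : Fin n) : ContinuousWithinAt (fun u => x u i) (Ioi t) t :=
  (continuous_apply i).continuousAt.comp_continuousWithinAt
    ((hsol.1 t ht).mono (Ioi_subset_Ici ht))

lemma IsSolution.eventually_abs_lt_of_abs_eq (hsol : IsSolution h σ B μ φ x) (hh : 0 ≤ h)
    (hα : 0 ≤ α) (hξ : ∀ j, 0 < ξ j)
    (hdecay : ∀ k i, (metz (B k) *ᵥ ξ) i + Real.exp (α * h) * (Vmat (μ k) *ᵥ ξ) i + α * ξ i < 0)
    {c t : ℝ} {i : Fin n} (hc : 0 < c) (ht : 0 ≤ t) (hσt : ∀ᶠ s in 𝓝 t, σ s = σ t)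
    (hhist : ∀ u ∈ Icc (-h) t, ∀ j, |x u j| ≤ c * ξ j * Real.exp (-α * u))
    (htouch : |x t i| = c * ξ i * Real.exp (-α * t)) :
    ∀ᶠ u in 𝓝[>] t, |x u i| < c * ξ i * Real.exp (-α * u) := by
  have hpos : 0 < c * ξ i * Real.exp (-α * t) := by have := hξ i; positivity
  have hxi : x t i ≠ 0 := fun h0 => by rw [h0, abs_zero] at htouch; linarith
  set s := |x t i| / x t i
  have hs : |s| = 1 := by rw [abs_div, abs_abs, div_self (abs_ne_zero.2 hxi)]
  have hsx : s * x t i = c * ξ i * Real.exp (-α * t) := (div_mul_cancel₀ _ hxi).trans htouch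
  have hode : HasDerivWithinAt (fun u => x u i) (delayRhs (B (σ t)) (μ (σ t)) x t i) (Ici t) t :=
    hsol.2.2 t ht hσt i
  have hbarrier : HasDerivAt (fun u => c * ξ i * Real.exp (-α * u))
      (-α * (c * ξ i * Real.exp (-α * t))) t :=
    (((hasDerivAt_id' t).const_mul (-α)).exp.const_mul (c * ξ i)).congr_deriv (by ring)
  have hbelow := ((hode.const_mul s).sub hbarrier.hasDerivWithinAt).eventually_nhdsGT_lt
    (sub_neg.2 (sign_mul_delayRhs_lt hh hα hξ hc (hdecay (σ t) i)
      (fun u hu => hhist u ⟨by linarith [hu.1], hu.2⟩) hs hsx))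
  have habove : ∀ᶠ u in 𝓝[>] t, -(s * x u i) < c * ξ i * Real.exp (-α * u) := by
    have hcont : ContinuousWithinAt (fun u => c * ξ i * Real.exp (-α * u) + s * x u i) (Ioi t) t :=
      (Continuous.continuousWithinAt (by fun_prop)).add
        ((hsol.continuousWithinAt_Ioi (by linarith) i).const_mul s)
    have hpos' : 0 < c * ξ i * Real.exp (-α * t) + s * x t i := by rw [hsx]; linarith
    filter_upwards [hcont.tendsto.eventually_const_lt hpos'] with u hu
    linarith
  filter_upwards [hbelow, habove] with u hu₁ hu₂
  have hx : |x u i| = |s * x u i| := by rw [abs_mul, hs, one_mul]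
  rw [hx, abs_lt]
  simp only [Pi.sub_apply, hsx, sub_self] at hu₁
  constructor <;> linarith

lemma IsSolution.isClosed_setOf_abs_le_inter_Icc (hsol : IsSolution h σ B μ φ x) (c : ℝ)
    {τ τ' : ℝ} (hτ : -h ≤ τ) :
    IsClosed ({u | ∀ j, |x u j| ≤ c * ξ j * Real.exp (-α * u)} ∩ Icc τ τ') := by
  have hx : ContinuousOn x (Icc τ τ') := hsol.1.mono fun u hu => hτ.trans hu.1
  have : {u | ∀ j, |x u j| ≤ c * ξ j * Real.exp (-α * u)} ∩ Icc τ τ' =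
      Icc τ τ' ∩ (fun u j => |x u j| - c * ξ j * Real.exp (-α * u)) ⁻¹' Iic 0 := by
    ext u
    simp [Pi.le_def, and_comm]
  rw [this]
  refine ContinuousOn.preimage_isClosed_of_isClosed ?_ isClosed_Icc isClosed_Iic
  exact continuousOn_pi.2 fun j =>
    ((continuous_apply j).comp_continuousOn hx).abs.sub (by fun_prop)

lemma IsSolution.abs_le_of_abs_le (hsol : IsSolution h σ B μ φ x) (hh : 0 ≤ h)
    (hα : 0 ≤ α) (hξ : ∀ j, 0 < ξ j)
    (hdecay : ∀ k i, (metz (B k) *ᵥ ξ) i + Real.exp (α * h) * (Vmat (μ k) *ᵥ ξ) i + α * ξ i < 0)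
    {a τ τ' : ℝ} (ha : 0 ≤ a) (hτ : 0 ≤ τ)
    (hσ : ∀ t ∈ Ioo τ τ', ∀ᶠ s in 𝓝 t, σ s = σ t)
    (hbound : ∀ u ∈ Icc (-h) τ, ∀ j, |x u j| ≤ a * ξ j * Real.exp (-α * u)) :
    ∀ u ∈ Icc (-h) τ', ∀ j, |x u j| ≤ a * ξ j * Real.exp (-α * u) := by
  -- with `c > a` the bound is strict at `τ`, so the first touching time is not the switching
  -- instant `τ`, where no derivative is available
  suffices H : ∀ c > a, ∀ u ∈ Icc τ τ', ∀ j, |x u j| ≤ c * ξ j * Real.exp (-α * u) by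
    intro u hu j
    rcases le_or_gt u τ with huτ | hτu
    · exact hbound u ⟨hu.1, huτ⟩ j
    rw [mul_assoc]
    exact le_mul_of_forall_gt_le_mul (mul_pos (hξ j) (Real.exp_pos _)) fun c hc =>
      (H c hc u ⟨hτu.le, hu.2⟩ j).trans_eq (mul_assoc _ _ _)
  intro c hac
  have hbound_c : ∀ u ∈ Icc (-h) τ, ∀ j, |x u j| ≤ c * ξ j * Real.exp (-α * u) :=
    fun u hu j => (hbound u hu j).trans (by have := hξ j; gcongr)
  refine fun u hu j => IsClosed.Icc_subset_of_forall_mem_nhdsGT_of_Icc_subset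
    (hsol.isClosed_setOf_abs_le_inter_Icc c (by linarith)) (hbound_c τ ⟨by linarith, le_rfl⟩)
    (fun t ht hS => ?_) hu j
  have hhist : ∀ u ∈ Icc (-h) t, ∀ j, |x u j| ≤ c * ξ j * Real.exp (-α * u) := fun u hu =>
    (le_or_gt u τ).elim (fun huτ => hbound_c u ⟨hu.1, huτ⟩) fun hτu => hS ⟨hτu.le, hu.2⟩
  refine eventually_all.2 fun i => ?_
  rcases (hhist t ⟨by linarith [ht.1], le_rfl⟩ i).lt_or_eq with hlt | heq
  · have hcont : ContinuousWithinAt (fun u => c * ξ i * Real.exp (-α * u) - |x u i|) (Ioi t) t :=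
      (Continuous.continuousWithinAt (by fun_prop)).sub
        (hsol.continuousWithinAt_Ioi (by linarith [ht.1]) i).abs
    filter_upwards [hcont.tendsto.eventually_const_lt (sub_pos.2 hlt)] with u hu
    linarith
  · have htτ : τ < t := by
      refine ht.1.lt_of_ne fun hτt => ?_
      have hτbound := hbound t ⟨by linarith, hτt.ge⟩ i
      rw [heq] at hτbound
      have : 0 < ξ i * Real.exp (-α * t) := mul_pos (hξ i) (Real.exp_pos _)
      nlinarith
    exact (hsol.eventually_abs_lt_of_abs_eq hh hα hξ hdecay (by linarith) (by linarith [ht.1])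
      (hσ t ⟨htτ, ht.2⟩) hhist heq).mono fun _ => le_of_lt

lemma IsSolution.abs_le_of_isSwitchingSignal (hsol : IsSolution h σ B μ φ x)
    (hσ : IsSwitchingSignal σ) (hh : 0 ≤ h) (hα : 0 ≤ α) (hξ : ∀ j, 0 < ξ j)
    (hdecay : ∀ k i, (metz (B k) *ᵥ ξ) i + Real.exp (α * h) * (Vmat (μ k) *ᵥ ξ) i + α * ξ i < 0)
    {t : ℝ} (ht : 0 ≤ t) (j : Fin n) :
    |x t j| ≤ ‖φ‖ * ‖ξ⁻¹‖ * ξ j * Real.exp (-α * t) := by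
  obtain ⟨τ, hτ0, hτmono, hτunbdd, hτσ⟩ := hσ.exists_switchingTimes
  have hinit : ∀ u ∈ Icc (-h) 0, ∀ j, |x u j| ≤ ‖φ‖ * ‖ξ⁻¹‖ * ξ j * Real.exp (-α * u) := by
    intro u hu j
    have hφ : |x u j| ≤ ‖φ‖ := by
      rw [hsol.2.1 ⟨u, hu⟩, ← Real.norm_eq_abs]
      exact (norm_le_pi_norm _ j).trans (φ.norm_coe_le_norm _)
    have hξ_inv : 1 ≤ ‖ξ⁻¹‖ * ξ j :=
      calc 1 = (ξ j)⁻¹ * ξ j := (inv_mul_cancel₀ (hξ j).ne').symm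
        _ ≤ ‖ξ⁻¹‖ * ξ j :=
          mul_le_mul_of_nonneg_right ((le_abs_self _).trans (norm_le_pi_norm ξ⁻¹ j)) (hξ j).le
    have hexp : 1 ≤ Real.exp (-α * u) := Real.one_le_exp (by nlinarith [hu.2])
    calc |x u j| ≤ ‖φ‖ * (‖ξ⁻¹‖ * ξ j) * 1 := by nlinarith [norm_nonneg φ]
      _ ≤ _ := by rw [← mul_assoc]; have := hξ j; gcongr
  have hbound : ∀ m, ∀ u ∈ Icc (-h) (τ m), ∀ j,
      |x u j| ≤ ‖φ‖ * ‖ξ⁻¹‖ * ξ j * Real.exp (-α * u) := by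
    intro m
    induction m with
    | zero => rwa [hτ0]
    | succ m ih =>
      exact hsol.abs_le_of_abs_le hh hα hξ hdecay (by positivity) (hτ0 ▸ hτmono m.zero_le)
        (hτσ m) ih
  obtain ⟨m, hm⟩ := hτunbdd t
  exact hbound m t ⟨by linarith, hm⟩ j

end Solution

theorem expStableSw_of_metzler {h : ℝ} {N n : ℕ} {B : Fin N → Matrix (Fin n) (Fin n) ℝ}
    {μ : Fin N → Fin n → Fin n → SignedMeasure (Icc (-h) (0:ℝ))} (hh : 0 ≤ h)
    {ξ : Fin n → ℝ} (hξ : ∀ j, 0 < ξ j)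
    (hneg : ∀ k i, ((metz (B k) + Vmat (μ k)) *ᵥ ξ) i < 0) : ExpStableSw h B μ := by
  obtain ⟨α, hα, hdecay⟩ := exists_pos_forall_add_exp_mul_add_mul_lt h
    (a := fun ki : Fin N × Fin n => (metz (B ki.1) *ᵥ ξ) ki.2)
    (b := fun ki => (Vmat (μ ki.1) *ᵥ ξ) ki.2) (c := fun ki => ξ ki.2)
    fun ki => by simpa only [add_mulVec, Pi.add_apply] using hneg ki.1 ki.2
  refine ⟨‖ξ‖ * ‖ξ⁻¹‖ + 1, by positivity, α, hα, fun σ hσ φ x hsol t ht => ?_⟩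
  have hxt : ‖x t‖ ≤ ‖φ‖ * ‖ξ⁻¹‖ * ‖ξ‖ * Real.exp (-α * t) :=
    (pi_norm_le_iff_of_nonneg (by positivity)).2 fun j => (Real.norm_eq_abs _).trans_le <|
      (hsol.abs_le_of_isSwitchingSignal hσ hh hα.le hξ (fun k i => hdecay (k, i)) ht j).trans
        (by gcongr; exact (le_abs_self _).trans (norm_le_pi_norm ξ j))
  have := mul_nonneg (norm_nonneg φ) (Real.exp_pos (-α * t)).le
  nlinarith

theorem expStableSw_pert_of_mul_norm_lt {h : ℝ} {N n : ℕ} {r q s p : Fin N → ℕ}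
    {A : Fin N → Matrix (Fin n) (Fin n) ℝ}
    {ν : Fin N → Fin n → Fin n → SignedMeasure (Icc (-h) (0:ℝ))}
    {D0 : ∀ k, Matrix (Fin n) (Fin (r k)) ℝ} {Δ : ∀ k, Matrix (Fin (r k)) (Fin (q k)) ℝ}
    {E0 : ∀ k, Matrix (Fin (q k)) (Fin n) ℝ} {D1 : ∀ k, Matrix (Fin n) (Fin (s k)) ℝ}
    {δ : ∀ k, Fin (s k) → Fin (p k) → SignedMeasure (Icc (-h) (0:ℝ))}
    {E1 : ∀ k, Matrix (Fin (p k)) (Fin n) ℝ} (hh : 0 ≤ h) {ξ : Fin n → ℝ} (hξ : ∀ j, 0 < ξ j)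
    {b : ℝ} (hb : ∀ k i, b ≤ -(((metz (A k) + Vmat (ν k)) *ᵥ ξ) i))
    (hpert : ∀ k, (matNorm (D0 k) * matNorm (E0 k) * matNorm (Δ k)
      + matNorm (D1 k) * matNorm (E1 k) * mnorm (δ k)) * ‖ξ‖ < b) :
    ExpStableSw h (fun k => A k + D0 k * Δ k * E0 k)
      (fun k => pertKernel (ν k) (D1 k) (δ k) (E1 k)) :=
  expStableSw_of_metzler hh hξ fun k i => by
    linarith [metz_add_Vmat_pert_mulVec_le (A k) (ν k) (D0 k) (Δ k) (E0 k) (D1 k) (δ k) (E1 k)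
      (fun j => (hξ j).le) i, hb k i, hpert k]

theorem stabRadius_lower_bound_general {N n : ℕ} (h : ℝ) (hh : 0 < h)
    (A : Fin N → Matrix (Fin n) (Fin n) ℝ)
    (ν : Fin N → Fin n → Fin n → MeasureTheory.SignedMeasure (Set.Icc (-h) (0:ℝ)))
    (r q s p : Fin N → ℕ)
    (D0 : ∀ k, Matrix (Fin n) (Fin (r k)) ℝ) (E0 : ∀ k, Matrix (Fin (q k)) (Fin n) ℝ)
    (D1 : ∀ k, Matrix (Fin n) (Fin (s k)) ℝ) (E1 : ∀ k, Matrix (Fin (p k)) (Fin n) ℝ)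
    (G : Set (Fin n → ℝ))
    (hG : G = {ξ | (∀ i, 0 < ξ i) ∧ ∀ k, ∀ i, ((metz (A k) + Vmat (ν k)).mulVec ξ) i < 0})
    (β : (Fin n → ℝ) → ℝ)
    (hβ : ∀ ξ, β ξ = ⨅ k : Fin N, ⨅ i : Fin n, -(((metz (A k) + Vmat (ν k)).mulVec ξ) i))
    (M0 : ℝ)
    (hM0 : M0 = ⨆ k, max (matNorm (D0 k) * matNorm (E0 k)) (matNorm (D1 k) * matNorm (E1 k))) :
    ENNReal.ofReal ((1 / M0) * ⨆ ξ ∈ G, β ξ / ‖ξ‖) ≤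
      sInf { rr : ℝ≥0∞ |
        ∃ (Δ : ∀ k, Matrix (Fin (r k)) (Fin (q k)) ℝ)
          (δ : ∀ k, Fin (s k) → Fin (p k) → MeasureTheory.SignedMeasure (Set.Icc (-h) (0:ℝ))),
          ¬ ExpStableSw h (fun k => A k + D0 k * Δ k * E0 k)
              (fun k => pertKernel (ν k) (D1 k) (δ k) (E1 k)) ∧
          rr = ENNReal.ofReal (⨆ k, matNorm (Δ k) + mnorm (δ k)) } := by
  refine le_sInf ?_
  rintro _ ⟨Δ, δ, hunstable, rfl⟩
  set R := ⨆ k, matNorm (Δ k) + mnorm (δ k)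
  have hR : 0 ≤ R := Real.iSup_nonneg fun k => add_nonneg (matNorm_nonneg _) (mnorm_nonneg _)
  have hM0_bounds : 0 ≤ M0 ∧ ∀ k, matNorm (D0 k) * matNorm (E0 k) ≤ M0 ∧
      matNorm (D1 k) * matNorm (E1 k) ≤ M0 := hM0 ▸
    ⟨Real.iSup_nonneg fun k => le_max_of_le_left (mul_nonneg (matNorm_nonneg _) (matNorm_nonneg _)),
      fun k => max_le_iff.1 <| le_ciSup (f := fun k =>
        max (matNorm (D0 k) * matNorm (E0 k)) (matNorm (D1 k) * matNorm (E1 k)))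
        (Finite.bddAbove_range _) k⟩
  have hcoef : ∀ k, matNorm (D0 k) * matNorm (E0 k) * matNorm (Δ k)
      + matNorm (D1 k) * matNorm (E1 k) * mnorm (δ k) ≤ R * M0 := fun k => by
    have hRk : matNorm (Δ k) + mnorm (δ k) ≤ R :=
      le_ciSup (f := fun k => matNorm (Δ k) + mnorm (δ k)) (Finite.bddAbove_range _) k
    nlinarith [hM0_bounds.2 k, matNorm_nonneg (Δ k), mnorm_nonneg (δ k)]
  have hratio : ∀ ξ ∈ G, β ξ / ‖ξ‖ ≤ R * M0 := by
    intro ξ hξG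
    rw [hG] at hξG
    by_contra! hlt
    have hξ : 0 < ‖ξ‖ := (norm_nonneg ξ).lt_of_ne fun h0 => by
      rw [← h0, div_zero] at hlt
      nlinarith
    refine hunstable (expStableSw_pert_of_mul_norm_lt hh.le hξG.1 (b := β ξ) (fun k i => hβ ξ ▸
      (ciInf_le (Finite.bddBelow_range _) k).trans (ciInf_le (Finite.bddBelow_range _) i))
      fun k => ?_)
    calc _ ≤ R * M0 * ‖ξ‖ := mul_le_mul_of_nonneg_right (hcoef k) hξ.le
      _ < β ξ := (lt_div_iff₀ hξ).1 hlt
  rw [one_div_mul_eq_div]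
  have hRM0 := mul_nonneg hR hM0_bounds.1
  exact ENNReal.ofReal_le_ofReal <| div_le_of_le_mul₀ hM0_bounds.1 hR <|
    Real.iSup_le (fun ξ => Real.iSup_le (hratio ξ) hRM0) hRM0

/-- Theorem 2 (lower bound): if the switched system `(A, ν)` is exponentially stable under
arbitrary switching and the cone `G = {ξ ≫ 0 : (M(A⁰_k)+V(ν_k))ξ ≪ 0 ∀k}` is nonempty, then
the structured stability radius w.r.t. the affine perturbations
`A⁰_k ↦ A⁰_k + D⁰_k Δ_k E⁰_k`, `ν_k ↦ ν_k + D¹_k δ_k E¹_k` is bounded below by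
`(1/M₀) sup_{ξ ∈ G} β(ξ)/‖ξ‖`. -/
theorem stabRadius_lower_bound {N n : ℕ} (h : ℝ) (hh : 0 < h)
    (A : Fin N → Matrix (Fin n) (Fin n) ℝ)
    (ν : Fin N → Fin n → Fin n → MeasureTheory.SignedMeasure (Set.Icc (-h) (0:ℝ)))
    (r q s p : Fin N → ℕ)
    (D0 : ∀ k, Matrix (Fin n) (Fin (r k)) ℝ) (E0 : ∀ k, Matrix (Fin (q k)) (Fin n) ℝ)
    (D1 : ∀ k, Matrix (Fin n) (Fin (s k)) ℝ) (E1 : ∀ k, Matrix (Fin (p k)) (Fin n) ℝ)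
    (hstab : ExpStableSw h A ν)
    (G : Set (Fin n → ℝ))
    (hG : G = {ξ | (∀ i, 0 < ξ i) ∧ ∀ k, ∀ i, ((metz (A k) + Vmat (ν k)).mulVec ξ) i < 0})
    (hGne : G.Nonempty)
    (β : (Fin n → ℝ) → ℝ)
    (hβ : ∀ ξ, β ξ = ⨅ k : Fin N, ⨅ i : Fin n, -(((metz (A k) + Vmat (ν k)).mulVec ξ) i))
    (M0 : ℝ)
    (hM0 : M0 = ⨆ k, max (matNorm (D0 k) * matNorm (E0 k)) (matNorm (D1 k) * matNorm (E1 k))) :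
    ENNReal.ofReal ((1 / M0) * ⨆ ξ ∈ G, β ξ / ‖ξ‖) ≤
      sInf { rr : ℝ≥0∞ |
        ∃ (Δ : ∀ k, Matrix (Fin (r k)) (Fin (q k)) ℝ)
          (δ : ∀ k, Fin (s k) → Fin (p k) → MeasureTheory.SignedMeasure (Set.Icc (-h) (0:ℝ))),
          ¬ ExpStableSw h (fun k => A k + D0 k * Δ k * E0 k)
              (fun k => pertKernel (ν k) (D1 k) (δ k) (E1 k)) ∧
          rr = ENNReal.ofReal (⨆ k, matNorm (Δ k) + mnorm (δ k)) } :=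
  stabRadius_lower_bound_general h hh A ν r q s p D0 E0 D1 E1 G hG β hβ M0 hM0

end
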